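/- Given nonnegative reals a, c, e satisfying: (i) E_q ≤ a (behavior cloning error under visitation q), (ii) ‖p − q‖₁ ≤ c (visitation shift), (iii) m ≤ e (mixture deviation, squared TV ≤ e), and the pointwise bound that the squared TV distances take values in [0,1], the three-term decomposition E_{s∼p}[TV(π̂^{B}, π^1)²] ≤ 2c + 2a + 2e holds, via E_p[‖μ−λ‖²] ≤ 2E_p[‖μ−ν‖²] + 2E_p[‖ν−λ‖²], change of measure, and the squared-TV ≤ 1 bound. -/
import Mathlib

/-- abstract three-term decomposition behind Theorem 1. With
`X s = TV(π̂^{1:B}(·|s), π^{1:B}(·|s))`, `Y s = TV(π^{1:B}(·|s), π^1(·|s))`,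
`Z s = TV(π̂^{1:B}(·|s), π^1(·|s))` all in `[0,1]`, the squared-norm triangle
bound `Z² ≤ 2X² + 2Y²`, the cloning bound `E_q[X²] ≤ a`, the visitation shift
`‖p − q‖₁ ≤ c`, and the mixture deviation `Y² ≤ e`, we get
`E_{s∼p}[Z(s)²] ≤ 2c + 2a + 2e`. -/
theorem three_term_decomposition {S : Type*} [Fintype S]
    (p q X Y Z : S → ℝ) (a c e : ℝ) (ha : 0 ≤ a) (hc : 0 ≤ c) (he : 0 ≤ e)
    (hp_nonneg : ∀ s, 0 ≤ p s) (hp_sum : ∑ s, p s = 1)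
    (hq_nonneg : ∀ s, 0 ≤ q s) (hq_sum : ∑ s, q s = 1)
    (hX : ∀ s, 0 ≤ X s ∧ X s ≤ 1)
    (hY : ∀ s, 0 ≤ Y s ∧ Y s ≤ 1)
    (hZ : ∀ s, 0 ≤ Z s ∧ Z s ≤ 1)
    (htriangle : ∀ s, Z s ^ 2 ≤ 2 * X s ^ 2 + 2 * Y s ^ 2)
    (hclone : ∑ s, q s * X s ^ 2 ≤ a)
    (hshift : ∑ s, |p s - q s| ≤ c)
    (hmix : ∀ s, Y s ^ 2 ≤ e) :
    ∑ s, p s * Z s ^ 2 ≤ 2 * c + 2 * a + 2 * e := by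
  have h1 : ∑ s, p s * Z s ^ 2 ≤ ∑ s, p s * (2 * X s ^ 2 + 2 * Y s ^ 2) := by
    apply Finset.sum_le_sum
    intro s _
    exact mul_le_mul_of_nonneg_left (htriangle s) (hp_nonneg s)
  have h2 : ∑ s, p s * (2 * X s ^ 2 + 2 * Y s ^ 2)
      = 2 * ∑ s, p s * X s ^ 2 + 2 * ∑ s, p s * Y s ^ 2 := by
    rw [Finset.mul_sum, Finset.mul_sum, ← Finset.sum_add_distrib]
    congr 1; ext s; ring
  have hX2 : ∑ s, p s * X s ^ 2 ≤ c + a := by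
    have : ∑ s, p s * X s ^ 2 = ∑ s, (p s - q s) * X s ^ 2 + ∑ s, q s * X s ^ 2 := by
      rw [← Finset.sum_add_distrib]; congr 1; ext s; ring
    rw [this]
    have hd : ∑ s, (p s - q s) * X s ^ 2 ≤ ∑ s, |p s - q s| := by
      apply Finset.sum_le_sum
      intro s _
      calc (p s - q s) * X s ^ 2 ≤ |p s - q s| * X s ^ 2 :=
            mul_le_mul_of_nonneg_right (le_abs_self _) (sq_nonneg _)
        _ ≤ |p s - q s| * 1 := by
            apply mul_le_mul_of_nonneg_left _ (abs_nonneg _)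
            have := (hX s).2; have := (hX s).1; nlinarith
        _ = |p s - q s| := mul_one _
    linarith [hd.trans hshift]
  have hY2 : ∑ s, p s * Y s ^ 2 ≤ e := by
    calc ∑ s, p s * Y s ^ 2 ≤ ∑ s, p s * e := by
          apply Finset.sum_le_sum
          intro s _
          exact mul_le_mul_of_nonneg_left (hmix s) (hp_nonneg s)
      _ = e := by rw [← Finset.sum_mul, hp_sum, one_mul]
  calc ∑ s, p s * Z s ^ 2 ≤ 2 * ∑ s, p s * X s ^ 2 + 2 * ∑ s, p s * Y s ^ 2 := by
        rw [← h2]; exact h1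
    _ ≤ 2 * (c + a) + 2 * e := by linarith
    _ = 2 * c + 2 * a + 2 * e := by ring
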